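/- In one GSTP time step on an m1 × m2 grid with k escorts, the number of tiles that move is at most k · (max(m1, m2) − 1). -/

import Mathlib

/-!
A moving tile either enters an empty cell or pushes the tile that starts in its target cell;
by the corner-following rule and the ban on swaps, that tile moves in the same direction. So
ahead of every moving tile there is a straight train of tiles moving with it, ending at a cell
that is empty at the start, and since the tile and that cell both lie in the grid the train is
shorter than `max m₁ m₂ - 1`. A moving tile is determined by the empty cell and the length of
its train, which injects the moving tiles into (empty cells) × `[0, max m₁ m₂ - 1)`.
-/

/-- A cell of an `m₁ × m₂` grid. -/
abbrev Cell (m₁ m₂ : ℕ) := Fin m₁ × Fin m₂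

/-- Manhattan (L1) distance between two cells. -/
def manhattan {m₁ m₂ : ℕ} (p q : Cell m₁ m₂) : ℕ :=
  ((p.1.val : ℤ) - (q.1.val : ℤ)).natAbs + ((p.2.val : ℤ) - (q.2.val : ℤ)).natAbs

/-- The movement direction vector of tile `i` between configurations `c` and `c'`. -/
def dirOf {m₁ m₂ n : ℕ} (c c' : Fin n → Cell m₁ m₂) (i : Fin n) : ℤ × ℤ :=
  (((c' i).1.val : ℤ) - ((c i).1.val : ℤ), ((c' i).2.val : ℤ) - ((c i).2.val : ℤ))

/-- One synchronous time step of the generalized sliding-tile puzzle: every tile stays or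
moves to an adjacent cell, no meet collisions, no head-on collisions, and the
corner-following constraint holds. -/
structure GstpStep (m₁ m₂ n : ℕ) (c c' : Fin n → Cell m₁ m₂) : Prop where
  start_inj : Function.Injective c
  end_inj : Function.Injective c'
  move : ∀ i, manhattan (c i) (c' i) ≤ 1
  no_swap : ∀ i j, i ≠ j → ¬(c' i = c j ∧ c' j = c i)
  cfc : ∀ i j, i ≠ j → c' i = c j → c' i ≠ c i →
    (dirOf c c' i).1 * (dirOf c c' j).1 + (dirOf c c' i).2 * (dirOf c c' j).2 ≠ 0

/-- The GSTP instance with start `s` and goal `g` is solvable within `T` time steps. -/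
def SolvableIn (m₁ m₂ n T : ℕ) (s g : Fin n → Cell m₁ m₂) : Prop :=
  ∃ T' ≤ T, ∃ c : ℕ → Fin n → Cell m₁ m₂, c 0 = s ∧ c T' = g ∧
    ∀ t < T', GstpStep m₁ m₂ n (c t) (c (t + 1))

def Cell.toInt {m₁ m₂ : ℕ} (p : Cell m₁ m₂) : ℤ × ℤ := ((p.1 : ℤ), (p.2 : ℤ))

lemma Cell.toInt_injective {m₁ m₂ : ℕ} :
    Function.Injective (Cell.toInt (m₁ := m₁) (m₂ := m₂)) := by
  intro p q h
  simp only [Cell.toInt, Prod.mk.injEq, Nat.cast_inj] at h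
  exact Prod.ext (Fin.ext h.1) (Fin.ext h.2)

lemma dirOf_eq_sub {m₁ m₂ n : ℕ} (c c' : Fin n → Cell m₁ m₂) (i : Fin n) :
    dirOf c c' i = (c' i).toInt - (c i).toInt := rfl

def IsUnitStep (d : ℤ × ℤ) : Prop := d.1.natAbs + d.2.natAbs = 1

namespace IsUnitStep

variable {d e : ℤ × ℤ}

lemma cases (hd : IsUnitStep d) : d = (1, 0) ∨ d = (-1, 0) ∨ d = (0, 1) ∨ d = (0, -1) := by
  obtain ⟨a, b⟩ := d
  unfold IsUnitStep at hd
  simp only [Prod.mk.injEq]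
  omega

lemma eq_or_eq_neg_of_dot_ne_zero (hd : IsUnitStep d) (he : IsUnitStep e)
    (h : d.1 * e.1 + d.2 * e.2 ≠ 0) : e = d ∨ e = -d := by
  rcases hd.cases with rfl | rfl | rfl | rfl <;> rcases he.cases with rfl | rfl | rfl | rfl <;>
    simp_all

lemma lt_max_of_toInt_eq {m₁ m₂ : ℕ} (hd : IsUnitStep d) {p q : Cell m₁ m₂} {t : ℕ}
    (h : q.toInt = p.toInt + (t : ℤ) • d) : t < max m₁ m₂ := by
  have := p.1.isLt; have := p.2.isLt; have := q.1.isLt; have := q.2.isLt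
  simp only [Cell.toInt, Prod.ext_iff, Prod.fst_add, Prod.snd_add, Prod.smul_fst,
    Prod.smul_snd, smul_eq_mul] at h
  rcases hd.cases with rfl | rfl | rfl | rfl <;> simp at h <;> omega

end IsUnitStep

open Classical in
noncomputable def trainNext {m₁ m₂ n : ℕ} (c c' : Fin n → Cell m₁ m₂) (i : Fin n) : Fin n :=
  if h : c' i ∈ Set.range c then h.choose else i

lemma trainNext_spec {m₁ m₂ n : ℕ} {c c' : Fin n → Cell m₁ m₂} {i : Fin n}
    (h : c' i ∈ Set.range c) : c (trainNext c c' i) = c' i := by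
  rw [trainNext, dif_pos h]
  exact h.choose_spec

namespace GstpStep

variable {m₁ m₂ n : ℕ} {c c' : Fin n → Cell m₁ m₂}

lemma isUnitStep_dirOf (hstep : GstpStep m₁ m₂ n c c') {i : Fin n} (hi : c' i ≠ c i) :
    IsUnitStep (dirOf c c' i) := by
  have hmove := hstep.move i
  have hne : (c i).toInt ≠ (c' i).toInt := fun h => hi (Cell.toInt_injective h).symm
  simp only [manhattan, Cell.toInt, ne_eq, Prod.mk.injEq] at hmove hne
  unfold IsUnitStep dirOf
  omega

/-- Corner-following rules out a perpendicular direction for the blocking tile, and the ban on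
swaps the opposite one. -/
lemma trainNext_moves_same_dir (hstep : GstpStep m₁ m₂ n c c') {i : Fin n} (hi : c' i ≠ c i)
    (hblock : c' i ∈ Set.range c) :
    c' (trainNext c c' i) ≠ c (trainNext c c' i) ∧
      dirOf c c' (trainNext c c' i) = dirOf c c' i := by
  set j := trainNext c c' i
  have hcj : c j = c' i := trainNext_spec hblock
  have hji : j ≠ i := fun h => hi (h ▸ hcj).symm
  have hj : c' j ≠ c j := fun h => hji (hstep.end_inj (h.trans hcj))
  refine ⟨hj, ?_⟩
  rcases (hstep.isUnitStep_dirOf hi).eq_or_eq_neg_of_dot_ne_zero (hstep.isUnitStep_dirOf hj)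
    (hstep.cfc i j hji.symm hcj.symm hi) with hdir | hdir
  · exact hdir
  · refine absurd ⟨hcj.symm, Cell.toInt_injective ?_⟩ (hstep.no_swap i j hji.symm)
    rw [dirOf_eq_sub, dirOf_eq_sub, hcj] at hdir
    linear_combination hdir

lemma iterate_trainNext (hstep : GstpStep m₁ m₂ n c c') {i : Fin n} (hi : c' i ≠ c i) :
    ∀ r : ℕ, (∀ s < r, c' ((trainNext c c')^[s] i) ∈ Set.range c) →
      c' ((trainNext c c')^[r] i) ≠ c ((trainNext c c')^[r] i) ∧
        dirOf c c' ((trainNext c c')^[r] i) = dirOf c c' i ∧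
        (c ((trainNext c c')^[r] i)).toInt = (c i).toInt + (r : ℤ) • dirOf c c' i
  | 0, _ => ⟨hi, rfl, by simp⟩
  | r + 1, hblock => by
    obtain ⟨hmoves, hdir, hpos⟩ :=
      iterate_trainNext hstep hi r fun s hs => hblock s (Nat.lt_succ_of_lt hs)
    have hr := hblock r (Nat.lt_succ_self r)
    obtain ⟨hmoves', hdir'⟩ := hstep.trainNext_moves_same_dir hmoves hr
    rw [Function.iterate_succ_apply']
    refine ⟨hmoves', hdir'.trans hdir, ?_⟩
    rw [trainNext_spec hr, ← sub_add_cancel (c' _).toInt (c _).toInt, ← dirOf_eq_sub, hpos, hdir]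
    push_cast
    module

lemma exists_trainEnd (hstep : GstpStep m₁ m₂ n c c') {i : Fin n} (hi : c' i ≠ c i) :
    ∃ r, r + 1 < max m₁ m₂ ∧ (∀ s < r, c' ((trainNext c c')^[s] i) ∈ Set.range c) ∧
      c' ((trainNext c c')^[r] i) ∉ Set.range c := by
  have hunit := hstep.isUnitStep_dirOf hi
  have hend : ∃ r, c' ((trainNext c c')^[r] i) ∉ Set.range c := by
    by_contra! hblock
    exact (hunit.lt_max_of_toInt_eq
      (hstep.iterate_trainNext hi (max m₁ m₂) fun s _ => hblock s).2.2).false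
  refine ⟨Nat.find hend, ?_, fun s hs => not_not.mp (Nat.find_min hend hs), Nat.find_spec hend⟩
  obtain ⟨-, hdir, hpos⟩ := hstep.iterate_trainNext hi (Nat.find hend)
    fun s hs => not_not.mp (Nat.find_min hend hs)
  refine hunit.lt_max_of_toInt_eq (p := c i) (q := c' ((trainNext c c')^[Nat.find hend] i)) ?_
  rw [← sub_add_cancel (c' _).toInt (c _).toInt, ← dirOf_eq_sub, hpos, hdir]
  push_cast
  module

lemma eq_of_trainEnd_eq (hstep : GstpStep m₁ m₂ n c c') {i j : Fin n} (hi : c' i ≠ c i)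
    (hj : c' j ≠ c j) {r : ℕ} (hri : ∀ s < r, c' ((trainNext c c')^[s] i) ∈ Set.range c)
    (hrj : ∀ s < r, c' ((trainNext c c')^[s] j) ∈ Set.range c)
    (hend : c' ((trainNext c c')^[r] i) = c' ((trainNext c c')^[r] j)) : i = j := by
  obtain ⟨-, hdiri, hposi⟩ := hstep.iterate_trainNext hi r hri
  obtain ⟨-, hdirj, hposj⟩ := hstep.iterate_trainNext hj r hrj
  have hhead := hstep.end_inj hend
  rw [hhead] at hdiri hposi
  rw [hdiri] at hdirj
  rw [hposi, hdirj, add_left_inj] at hposj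
  exact hstep.start_inj (Cell.toInt_injective hposj)

open Finset in
lemma card_moving_le (hstep : GstpStep m₁ m₂ n c c') :
    #{i | c' i ≠ c i} ≤ #(univ \ univ.image c) * (max m₁ m₂ - 1) := by
  choose! r hr hblock hend using fun i (hi : c' i ≠ c i) => hstep.exists_trainEnd hi
  rw [← card_range (max m₁ m₂ - 1), ← card_product]
  refine card_le_card_of_injOn (fun i => (c' ((trainNext c c')^[r i] i), r i)) ?_ ?_
  · intro i hi
    replace hi : c' i ≠ c i := by simpa using hi
    refine mem_product.mpr
      ⟨mem_sdiff.mpr ⟨mem_univ _, ?_⟩, mem_range.mpr (Nat.lt_sub_of_add_lt (hr i hi))⟩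
    simpa using hend i hi
  · intro i hi j hj hij
    replace hi : c' i ≠ c i := by simpa using hi
    replace hj : c' j ≠ c j := by simpa using hj
    obtain ⟨hhead, hlen⟩ := Prod.mk.inj hij
    exact hstep.eq_of_trainEnd_eq hi hj (hblock i hi) (hlen ▸ hblock j hj) (hlen ▸ hhead)

end GstpStep

/-- In one GSTP time step on an `m₁ × m₂` grid with `k` escorts, the number
of tiles that move is at most `k * (max m₁ m₂ - 1)`. -/
theorem gstp_step_moving_tiles_le
    (m₁ m₂ n k : ℕ) (hesc : n + k = m₁ * m₂)
    (c c' : Fin n → Cell m₁ m₂) (hstep : GstpStep m₁ m₂ n c c') :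
    (Finset.univ.filter fun i => c' i ≠ c i).card ≤ k * (max m₁ m₂ - 1) := by
  have hescorts : (Finset.univ \ Finset.univ.image c).card = k := by
    rw [Finset.card_sdiff_of_subset (Finset.subset_univ _),
      Finset.card_image_of_injective _ hstep.start_inj]
    simp only [Finset.card_univ, Fintype.card_prod, Fintype.card_fin]
    omega
  exact hescorts ▸ hstep.card_moving_le
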